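/- Let P(x,t) be a monic polynomial in t of degree d ≥ 1 with coefficients in ℂ[x₁,…,x_k], and let q > 0. Then the following are equivalent: (1) there exist R, C > 0 such that every zero (x,t) of P with |x| ≥ R satisfies |t| ≤ C|x|^q; (2) q ≥ δ(P), where δ(P) = max_j deg(a_j)/j. -/

import Mathlib

/-!
If every root satisfies `|t| ≤ C|x|^q`, then by Vieta `a_j(x)`, up to sign the `j`-th elementary
symmetric function of the `d` roots, is `O(|x|^{qj})`. Along a ray on which the top homogeneous
component of `a_j` does not vanish, `a_j` grows exactly like `|x|^{deg a_j}`, so `deg a_j ≤ qj`.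
Conversely, if `deg a_j ≤ qj` for all `j`, then `d |a_j(x)| ≤ (K|x|^q)^j` for `|x| ≥ 1`, and
Fujiwara's bound (a root `t` satisfies `|t| ≤ B` as soon as `d |a_j| ≤ B^j` for all `j`) gives
the root estimate.
-/
open Filter Topology Finset Polynomial

theorem Real.le_of_eventually_mul_rpow_le {a b c C : ℝ} (hc : 0 < c)
    (h : ∀ᶠ r : ℝ in atTop, c * r ^ a ≤ C * r ^ b) : a ≤ b := by
  by_contra! hba
  have hgrowth : ∀ᶠ r : ℝ in atTop, C / c < r ^ (a - b) :=
    (tendsto_rpow_atTop (sub_pos.mpr hba)).eventually_gt_atTop _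
  obtain ⟨r, hle, hlt, hpos⟩ := (h.and (hgrowth.and (eventually_gt_atTop 0))).exists
  rw [div_lt_iff₀' hc] at hlt
  have : C * r ^ b < c * r ^ a :=
    calc C * r ^ b < c * r ^ (a - b) * r ^ b := by gcongr
      _ = c * r ^ a := by rw [mul_assoc, ← rpow_add hpos, sub_add_cancel]
  linarith

namespace MvPolynomial

variable {σ : Type*}

theorem norm_eval_le_of_one_le_norm {𝕜 : Type*} [Fintype σ] [NormedField 𝕜]
    (p : MvPolynomial σ 𝕜) {x : σ → 𝕜} (hx : 1 ≤ ‖x‖) :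
    ‖eval x p‖ ≤ (∑ m ∈ p.support, ‖p.coeff m‖) * ‖x‖ ^ p.totalDegree := by
  rw [eval_eq, Finset.sum_mul]
  refine (norm_sum_le _ _).trans (Finset.sum_le_sum fun m hm => ?_)
  rw [norm_mul, norm_prod]
  gcongr
  calc ∏ i ∈ m.support, ‖x i ^ m i‖ ≤ ∏ i ∈ m.support, ‖x‖ ^ m i := by
        gcongr with i; rw [norm_pow]; gcongr; exact norm_le_pi_norm x i
    _ = ‖x‖ ^ m.sum fun _ e => e := prod_pow_eq_pow_sum _ _ _
    _ ≤ ‖x‖ ^ p.totalDegree := pow_le_pow_right₀ hx (le_totalDegree hm)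

theorem IsHomogeneous.eval_smul {R : Type*} [CommSemiring R] {φ : MvPolynomial σ R} {n : ℕ}
    (hφ : φ.IsHomogeneous n) (s : R) (v : σ → R) :
    eval (s • v) φ = s ^ n * eval v φ := by
  rw [eval_eq, eval_eq, Finset.mul_sum]
  refine Finset.sum_congr rfl fun m hm => ?_
  simp only [Pi.smul_apply, smul_eq_mul, mul_pow, Finset.prod_mul_distrib,
    Finset.prod_pow_eq_pow_sum, ← hφ.degree_eq_sum_deg_support hm]
  ring

theorem homogeneousComponent_totalDegree_ne_zero {R : Type*} [CommSemiring R]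
    {p : MvPolynomial σ R} (hp : p ≠ 0) : homogeneousComponent p.totalDegree p ≠ 0 := by
  obtain ⟨m, hm, hmdeg⟩ := Finset.exists_mem_eq_sup p.support (support_nonempty.mpr hp)
    fun m => m.sum fun _ e => e
  refine ne_of_apply_ne (coeff m) ?_
  rw [coeff_homogeneousComponent, if_pos, coeff_zero]
  · exact mem_support_iff.mp hm
  · rw [totalDegree, hmdeg, Finsupp.degree_apply]; rfl

theorem tendsto_eval_smul_mul_inv_pow {𝕜 : Type*} [RCLike 𝕜] (p : MvPolynomial σ 𝕜)
    (v : σ → 𝕜) :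
    Tendsto (fun r : ℝ => eval ((r : 𝕜) • v) p * (r : 𝕜)⁻¹ ^ p.totalDegree) atTop
      (𝓝 (eval v (homogeneousComponent p.totalDegree p))) := by
  set n := p.totalDegree
  set g : 𝕜 → 𝕜 := fun s =>
    ∑ j ∈ range (n + 1), eval v (homogeneousComponent j p) * s ^ (n - j)
  have hg0 : g 0 = eval v (homogeneousComponent n p) := by
    simp only [g]
    rw [Finset.sum_eq_single_of_mem n (self_mem_range_succ n) fun j hj hjn => ?_]
    · simp
    · have : 0 < n - j := by grind
      simp [zero_pow this.ne']
  have hinv : Tendsto (fun r : ℝ => (r : 𝕜)⁻¹) atTop (𝓝 0) := by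
    simpa [Function.comp_def] using
      (RCLike.continuous_ofReal (K := 𝕜)).tendsto 0 |>.comp tendsto_inv_atTop_zero
  have hcont : Continuous g := by fun_prop
  rw [← hg0]
  refine ((hcont.tendsto 0).comp hinv).congr' ?_
  filter_upwards [eventually_gt_atTop 0] with r hr
  have hr' : (r : 𝕜) ≠ 0 := RCLike.ofReal_ne_zero.mpr hr.ne'
  conv_rhs => rw [← sum_homogeneousComponent p]
  simp only [Function.comp, g, map_sum, Finset.sum_mul]
  refine Finset.sum_congr rfl fun j hj => ?_
  rw [(homogeneousComponent_isHomogeneous j p).eval_smul,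
    pow_sub₀ _ (inv_ne_zero hr') (Nat.lt_succ_iff.mp (mem_range.mp hj))]
  simp only [inv_pow, inv_inv]
  ring

theorem totalDegree_le_of_norm_eval_le {𝕜 : Type*} [Fintype σ] [RCLike 𝕜]
    {p : MvPolynomial σ 𝕜} {m R C : ℝ} (hm : 0 ≤ m)
    (h : ∀ x : σ → 𝕜, R ≤ ‖x‖ → ‖eval x p‖ ≤ C * ‖x‖ ^ m) :
    (p.totalDegree : ℝ) ≤ m := by
  set n := p.totalDegree
  rcases Nat.eq_zero_or_pos n with hn | hn
  · simpa [hn] using hm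
  have hp : p ≠ 0 := by rintro rfl; simp [n] at hn
  obtain ⟨v, hv⟩ : ∃ v, eval v (homogeneousComponent n p) ≠ 0 := by
    by_contra! h0
    exact homogeneousComponent_totalDegree_ne_zero hp (funext fun v => by simpa using h0 v)
  have hv0 : 0 < ‖v‖ := by
    refine norm_pos_iff.mpr ?_
    rintro rfl
    apply hv
    simpa [zero_pow hn.ne'] using (homogeneousComponent_isHomogeneous n p).eval_smul 0 0
  set L := eval v (homogeneousComponent n p)
  refine Real.le_of_eventually_mul_rpow_le (c := ‖L‖ / 2) (C := C * ‖v‖ ^ m)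
    (by positivity) ?_
  have hlead := (tendsto_eval_smul_mul_inv_pow p v).norm.eventually
    (lt_mem_nhds (half_lt_self (norm_pos_iff.mpr hv)))
  filter_upwards [hlead, eventually_ge_atTop (R / ‖v‖), eventually_gt_atTop 0]
    with r hlead hR hr
  have hnorm : ‖(r : 𝕜) • v‖ = r * ‖v‖ := by
    rw [norm_smul, RCLike.norm_ofReal, abs_of_pos hr]
  have hup := h _ (by rw [hnorm]; exact (div_le_iff₀ hv0).mp hR)
  rw [norm_mul, norm_pow, norm_inv, RCLike.norm_ofReal, abs_of_pos hr, inv_pow,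
    ← div_eq_mul_inv, lt_div_iff₀ (by positivity)] at hlead
  rw [Real.rpow_natCast]
  calc ‖L‖ / 2 * r ^ n ≤ ‖eval ((r : 𝕜) • v) p‖ := hlead.le
    _ ≤ C * (r * ‖v‖) ^ m := hnorm ▸ hup
    _ = C * ‖v‖ ^ m * r ^ m := by rw [Real.mul_rpow hr.le hv0.le]; ring

end MvPolynomial

namespace Ploski

variable {K : Type*} {d : ℕ}

/-- `c i` is the coefficient `a_{i+1}` of `X ^ (d - 1 - i)`. -/
noncomputable def monicWithCoeffs [Semiring K] (c : Fin d → K) : K[X] :=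
  X ^ d + ∑ i, C (c i) * X ^ (d - 1 - i)

section Semiring

variable [Semiring K] (c : Fin d → K)

theorem degree_sum_C_mul_X_pow_lt :
    (∑ i, C (c i) * X ^ (d - 1 - i.1)).degree < (d : WithBot ℕ) := by
  refine (degree_sum_le _ _).trans_lt
    ((Finset.sup_lt_iff (WithBot.bot_lt_coe d)).mpr fun i _ => ?_)
  exact (degree_C_mul_X_pow_le _ _).trans_lt (Nat.cast_lt.mpr (by omega))

theorem monicWithCoeffs_monic [Nontrivial K] : (monicWithCoeffs c).Monic :=
  (monic_X_pow d).add_of_left (by rw [degree_X_pow]; exact degree_sum_C_mul_X_pow_lt c)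

theorem natDegree_monicWithCoeffs [Nontrivial K] : (monicWithCoeffs c).natDegree = d := by
  rw [monicWithCoeffs, natDegree_add_eq_left_of_degree_lt, natDegree_X_pow]
  simpa only [degree_X_pow] using degree_sum_C_mul_X_pow_lt c

theorem coeff_monicWithCoeffs (i : Fin d) : (monicWithCoeffs c).coeff (d - 1 - i) = c i := by
  rw [monicWithCoeffs, coeff_add, coeff_X_pow, if_neg (by omega), finsetSum_coeff, zero_add,
    Finset.sum_eq_single i]
  · simp
  · intro j _ hji
    rw [coeff_C_mul_X_pow, if_neg (by omega)]
  · simp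

end Semiring

theorem eval_monicWithCoeffs [CommSemiring K] (c : Fin d → K) (t : K) :
    (monicWithCoeffs c).eval t = t ^ d + ∑ i, c i * t ^ (d - 1 - i) := by
  simp [monicWithCoeffs, eval_finsetSum]

theorem norm_coeff_le_of_forall_root_norm_le [NormedField K] [IsAlgClosed K] {c : Fin d → K}
    {B : ℝ} (hB : ∀ t, t ^ d + ∑ i, c i * t ^ (d - 1 - i) = 0 → ‖t‖ ≤ B) (i : Fin d) :
    ‖c i‖ ≤ B ^ (i.1 + 1) * d.choose (i + 1) := by
  have := coeff_le_of_roots_le (f := RingHom.id K) (d - 1 - i) (monicWithCoeffs_monic c)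
    (IsAlgClosed.splits _) fun t ht => hB t ?_
  · rwa [Polynomial.map_id, coeff_monicWithCoeffs, natDegree_monicWithCoeffs,
      ← Nat.choose_symm (by omega), show d - (d - 1 - i) = i + 1 by omega] at this
  · rwa [Polynomial.map_id, mem_roots (monicWithCoeffs_monic c).ne_zero, IsRoot,
      eval_monicWithCoeffs] at ht

theorem norm_le_of_mul_norm_coeff_le_pow [NormedField K] {c : Fin d → K} {t : K} {B : ℝ}
    (ht : t ^ d + ∑ i, c i * t ^ (d - 1 - i) = 0) (hB : 0 ≤ B)
    (hc : ∀ i, d * ‖c i‖ ≤ B ^ (i.1 + 1)) : ‖t‖ ≤ B := by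
  by_contra! hBt
  rcases Nat.eq_zero_or_pos d with rfl | hd
  · simp at ht
  have hterm : ∀ i : Fin d, d * ‖c i * t ^ (d - 1 - i)‖ < ‖t‖ ^ d := fun i =>
    calc d * ‖c i * t ^ (d - 1 - i)‖ = d * ‖c i‖ * ‖t‖ ^ (d - 1 - i) := by
          rw [norm_mul, norm_pow, mul_assoc]
      _ < ‖t‖ ^ (i.1 + 1) * ‖t‖ ^ (d - 1 - i) :=
          mul_lt_mul_of_pos_right ((hc i).trans_lt (pow_lt_pow_left₀ hBt hB (by omega)))
            (pow_pos (hB.trans_lt hBt) _)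
      _ = ‖t‖ ^ d := by rw [← pow_add]; congr 1; omega
  have : d * ‖t‖ ^ d < d * ‖t‖ ^ d :=
    calc d * ‖t‖ ^ d = d * ‖∑ i, c i * t ^ (d - 1 - i)‖ := by
          rw [← norm_pow, eq_neg_of_add_eq_zero_left ht, norm_neg]
      _ ≤ ∑ i : Fin d, d * ‖c i * t ^ (d - 1 - i)‖ := by
          rw [← Finset.mul_sum]; gcongr; exact norm_sum_le _ _
      _ < ∑ _i : Fin d, ‖t‖ ^ d :=
          Finset.sum_lt_sum_of_nonempty ⟨⟨0, hd⟩, mem_univ _⟩ fun i _ => hterm i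
      _ = d * ‖t‖ ^ d := by simp
  exact lt_irrefl _ this

variable {σ : Type*} [Fintype σ]

theorem totalDegree_le_of_norm_root_le {a : Fin d → MvPolynomial σ ℂ} {q R C : ℝ}
    (hq : 0 ≤ q)
    (h : ∀ (x : σ → ℂ) (t : ℂ),
      t ^ d + ∑ i, MvPolynomial.eval x (a i) * t ^ (d - 1 - i) = 0 →
      R ≤ ‖x‖ → ‖t‖ ≤ C * ‖x‖ ^ q)
    (i : Fin d) : ((a i).totalDegree : ℝ) ≤ q * (i + 1) := by
  refine MvPolynomial.totalDegree_le_of_norm_eval_le (by positivity) (R := R)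
    (C := C ^ (i.1 + 1) * d.choose (i + 1)) fun x hx => ?_
  calc ‖MvPolynomial.eval x (a i)‖ ≤ (C * ‖x‖ ^ q) ^ (i.1 + 1) * d.choose (i + 1) :=
        norm_coeff_le_of_forall_root_norm_le (fun t ht => h x t ht hx) i
    _ = C ^ (i.1 + 1) * d.choose (i + 1) * ‖x‖ ^ (q * (i + 1)) := by
        rw [mul_pow, ← Real.rpow_mul_natCast (norm_nonneg x)]; push_cast; ring

theorem exists_norm_root_le_of_totalDegree_le {𝕜 : Type*} [NormedField 𝕜]
    {a : Fin d → MvPolynomial σ 𝕜} {q : ℝ}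
    (h : ∀ i, ((a i).totalDegree : ℝ) ≤ q * (i + 1)) :
    ∃ C : ℝ, 0 < C ∧ ∀ (x : σ → 𝕜) (t : 𝕜),
      t ^ d + ∑ i, MvPolynomial.eval x (a i) * t ^ (d - 1 - i) = 0 →
      1 ≤ ‖x‖ → ‖t‖ ≤ C * ‖x‖ ^ q := by
  set M : Fin d → ℝ := fun i => ∑ m ∈ (a i).support, ‖(a i).coeff m‖
  set K : ℝ := 1 + d * ∑ i, M i
  have hM : ∀ i, 0 ≤ M i := fun i => Finset.sum_nonneg fun _ _ => norm_nonneg _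
  have hK : 1 ≤ K := le_add_of_nonneg_right (by positivity)
  refine ⟨K, by positivity, fun x t ht hx => ?_⟩
  refine norm_le_of_mul_norm_coeff_le_pow ht (by positivity) fun i => ?_
  calc d * ‖MvPolynomial.eval x (a i)‖ ≤ d * (M i * ‖x‖ ^ (a i).totalDegree) := by
        gcongr; exact MvPolynomial.norm_eval_le_of_one_le_norm _ hx
    _ ≤ d * (∑ j, M j) * ‖x‖ ^ (q * (i + 1)) := by
        rw [mul_assoc]
        gcongr
        · exact Finset.single_le_sum (fun j _ => hM j) (mem_univ i)
        · rw [← Real.rpow_natCast]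
          exact Real.rpow_le_rpow_of_exponent_le hx (h i)
    _ ≤ K ^ (i.1 + 1) * ‖x‖ ^ (q * (i + 1)) := by
        gcongr
        exact (le_add_of_nonneg_left zero_le_one).trans (le_self_pow₀ hK (by omega))
    _ = (K * ‖x‖ ^ q) ^ (i.1 + 1) := by
        rw [mul_pow, ← Real.rpow_mul_natCast (norm_nonneg x)]; push_cast; ring

end Ploski

open Ploski

theorem stmt_5_general (k d : ℕ) (a : Fin d → MvPolynomial (Fin k) ℂ)
    (δ : ℝ)
    (hδ : IsGreatest {r : ℝ | ∃ i : Fin d, r = ((a i).totalDegree : ℝ) / (i.1 + 1)} δ)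
    (q : ℝ) (hq : 0 < q) :
    (∃ R C : ℝ, 0 < R ∧ 0 < C ∧ ∀ (x : Fin k → ℂ) (t : ℂ),
        t ^ d + ∑ i : Fin d, MvPolynomial.eval x (a i) * t ^ (d - 1 - i.1) = 0 →
        R ≤ ‖x‖ → ‖t‖ ≤ C * ‖x‖ ^ q)
      ↔ δ ≤ q := by
  constructor
  · rintro ⟨R, C, -, -, hroot⟩
    obtain ⟨i, rfl⟩ := hδ.1
    rw [div_le_iff₀ (by positivity)]
    exact totalDegree_le_of_norm_root_le hq.le hroot i
  · intro hδq
    obtain ⟨C, hC, hroot⟩ := exists_norm_root_le_of_totalDegree_le fun i =>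
      (div_le_iff₀ (by positivity)).mp ((hδ.2 ⟨i, rfl⟩).trans hδq)
    exact ⟨1, C, one_pos, hC, hroot⟩

/-- Płoski's lemma: for the monic polynomial
`P(x,t)=t^d+a₁(x)t^{d-1}+⋯+a_d(x)` and `q > 0`, there exist `R, C > 0` such that
every zero `(x,t)` with `‖x‖ ≥ R` satisfies `‖t‖ ≤ C‖x‖^q` if and only if
`q ≥ δ(P) = max_j (deg a_j)/j`. -/
theorem stmt_5 (k d : ℕ) (hd : 0 < d) (a : Fin d → MvPolynomial (Fin k) ℂ)
    (δ : ℝ)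
    (hδ : IsGreatest {r : ℝ | ∃ i : Fin d, r = ((a i).totalDegree : ℝ) / (i.1 + 1)} δ)
    (q : ℝ) (hq : 0 < q) :
    (∃ R C : ℝ, 0 < R ∧ 0 < C ∧ ∀ (x : Fin k → ℂ) (t : ℂ),
        t ^ d + ∑ i : Fin d, MvPolynomial.eval x (a i) * t ^ (d - 1 - i.1) = 0 →
        R ≤ ‖x‖ → ‖t‖ ≤ C * ‖x‖ ^ q)
      ↔ δ ≤ q :=
  stmt_5_general k d a δ hδ q hq
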